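/- Let Φ ∈ L⁴(ℝ²) have the Fourier decomposition in the angular variable Φ(r,θ) = Σ_{n∈ℤ} φ_n(r) e^{inθ}. Then ∫_{ℝ²} |Φ|⁴ dx ≥ 2π Σ_{p,q∈ℤ} ∫_0^∞ |φ_p(r)|² |φ_q(r)|² r dr. -/

import Mathlib

/-!
For fixed `r`, Parseval gives `∑ₙ |φₙ(r)|² = (2π)⁻¹ ∫₀^{2π} |Φ(r,θ)|² dθ`, and Cauchy–Schwarz on
`[0, 2π]` bounds the square of this by `(2π)⁻¹ ∫₀^{2π} |Φ(r,θ)|⁴ dθ`. As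
`∑_{p,q} |φ_p|²|φ_q|² = (∑ₙ |φₙ|²)²`, integrating against `r dr` gives the inequality once the
sum over `(p, q)` is taken out of the radial integral. Nothing is known about measurability in
`r`, so that exchange is done with lower Lebesgue integrals, which are superadditive for
arbitrary functions.
-/

open MeasureTheory Real Set
open scoped ENNReal

section
variable {α ι : Type*} [MeasurableSpace α] {μ : Measure α}

theorem sum_lintegral_le_lintegral_sum (s : Finset ι) (f : ι → α → ℝ≥0∞) :
    ∑ i ∈ s, ∫⁻ a, f i a ∂μ ≤ ∫⁻ a, ∑ i ∈ s, f i a ∂μ := by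
  classical
  induction s using Finset.induction with
  | empty => simp
  | insert i s hi ih =>
    simp only [Finset.sum_insert hi]
    exact (add_le_add_right ih _).trans (le_lintegral_add _ _)

theorem tsum_lintegral_le_lintegral_tsum (f : ι → α → ℝ≥0∞) :
    ∑' i, ∫⁻ a, f i a ∂μ ≤ ∫⁻ a, ∑' i, f i a ∂μ := by
  rw [ENNReal.tsum_eq_iSup_sum]
  exact iSup_le fun s => (sum_lintegral_le_lintegral_sum s f).trans
    (lintegral_mono fun a => ENNReal.sum_le_tsum s)

theorem ofReal_integral_le_lintegral_ofReal {f : α → ℝ} (hf : 0 ≤ᵐ[μ] f) :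
    ENNReal.ofReal (∫ a, f a ∂μ) ≤ ∫⁻ a, ENNReal.ofReal (f a) ∂μ := by
  by_cases hfi : Integrable f μ
  · exact (ofReal_integral_eq_lintegral_ofReal hfi hf).le
  · simp [integral_undef hfi]

theorem tsum_integral_le_integral_of_tsum_le {f : ι → α → ℝ} {g : α → ℝ} (hg : Integrable g μ)
    (hf_nonneg : ∀ᵐ a ∂μ, ∀ i, 0 ≤ f i a) (hf_summable : ∀ᵐ a ∂μ, Summable fun i => f i a)
    (hfg : ∀ᵐ a ∂μ, ∑' i, f i a ≤ g a) :
    ∑' i, ∫ a, f i a ∂μ ≤ ∫ a, g a ∂μ := by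
  have hg_nonneg : 0 ≤ᵐ[μ] g := by
    filter_upwards [hf_nonneg, hfg] with a h0 hle using (tsum_nonneg h0).trans hle
  have hfi_nonneg (i : ι) : 0 ≤ᵐ[μ] f i := hf_nonneg.mono fun a h => h i
  by_cases hs : Summable fun i => ∫ a, f i a ∂μ
  swap
  · rw [tsum_eq_zero_of_not_summable hs]
    exact integral_nonneg_of_ae hg_nonneg
  rw [← ENNReal.ofReal_le_ofReal_iff (integral_nonneg_of_ae hg_nonneg),
    ENNReal.ofReal_tsum_of_nonneg (fun i => integral_nonneg_of_ae (hfi_nonneg i)) hs,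
    ofReal_integral_eq_lintegral_ofReal hg hg_nonneg]
  calc ∑' i, ENNReal.ofReal (∫ a, f i a ∂μ)
      ≤ ∑' i, ∫⁻ a, ENNReal.ofReal (f i a) ∂μ :=
        ENNReal.tsum_le_tsum fun i => ofReal_integral_le_lintegral_ofReal (hfi_nonneg i)
    _ ≤ ∫⁻ a, ∑' i, ENNReal.ofReal (f i a) ∂μ := tsum_lintegral_le_lintegral_tsum _
    _ ≤ ∫⁻ a, ENNReal.ofReal (g a) ∂μ := by
        refine lintegral_mono_ae ?_
        filter_upwards [hf_nonneg, hf_summable, hfg] with a h0 hsa hle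
        rw [← ENNReal.ofReal_tsum_of_nonneg h0 hsa]
        exact ENNReal.ofReal_le_ofReal hle

theorem sq_integral_le_measureReal_univ_mul_integral_sq [IsFiniteMeasure μ] {f : α → ℝ}
    (hf : MemLp f 2 μ) : (∫ a, f a ∂μ) ^ 2 ≤ μ.real univ * ∫ a, f a ^ 2 ∂μ := by
  rcases eq_zero_or_neZero μ with rfl | _
  · simp
  have hJensen := (Even.convexOn_pow (n := 2) even_two).map_average_le
    (continuous_pow 2).continuousOn isClosed_univ (by simp) (hf.integrable one_le_two)
    hf.integrable_sq
  simp only [average_eq, smul_eq_mul] at hJensen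
  have hm : 0 < μ.real univ := by simp [measureReal_def, ENNReal.toReal_pos_iff, NeZero.ne μ]
  field_simp at hJensen
  exact hJensen
end

theorem HasSum.mul_self_of_nonneg {ι : Type*} {a : ι → ℝ} {s : ℝ} (ha : HasSum a s) (h0 : 0 ≤ a) :
    HasSum (fun p : ι × ι => a p.1 * a p.2) (s ^ 2) :=
  sq s ▸ ha.mul ha (ha.summable.mul_of_nonneg ha.summable h0 h0)

theorem sq_tsum_sq_fourierCoeffOn_le {a b : ℝ} (hab : a < b) {f : ℝ → ℂ}
    (hf : MemLp f 4 (volume.restrict (Ioc a b))) :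
    (∑' n, ‖fourierCoeffOn hab f n‖ ^ 2) ^ 2 ≤ (b - a)⁻¹ * ∫ x in a..b, ‖f x‖ ^ 4 := by
  have hf2 : MemLp (fun x => ‖f x‖ ^ 2) 2 (volume.restrict (Ioc a b)) := by
    have h42 : (4 / 2 : ℝ≥0∞) = 2 :=
      ((ENNReal.eq_div_iff (by norm_num) (by norm_num)).mpr (by norm_num)).symm
    simpa [h42, Real.rpow_two] using hf.norm_rpow_div 2
  have hCS := sq_integral_le_measureReal_univ_mul_integral_sq hf2
  simp only [← pow_mul, measureReal_restrict_apply_univ, Real.volume_real_Ioc_of_le hab.le] at hCS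
  rw [tsum_sq_fourierCoeffOn hab (hf.mono_exponent (by norm_num)), smul_eq_mul,
    intervalIntegral.integral_of_le hab.le, intervalIntegral.integral_of_le hab.le]
  have hba : 0 < b - a := sub_pos.mpr hab
  calc ((b - a)⁻¹ * ∫ x in Ioc a b, ‖f x‖ ^ 2) ^ 2
      = (b - a)⁻¹ ^ 2 * (∫ x in Ioc a b, ‖f x‖ ^ 2) ^ 2 := mul_pow _ _ _
    _ ≤ (b - a)⁻¹ ^ 2 * ((b - a) * ∫ x in Ioc a b, ‖f x‖ ^ 4) := by gcongr
    _ = (b - a)⁻¹ * ∫ x in Ioc a b, ‖f x‖ ^ 4 := by field_simp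

theorem fourierCoeffOn_zero_two_pi (f : ℝ → ℂ) (n : ℤ) :
    fourierCoeffOn two_pi_pos f n =
      (∫ θ in (0 : ℝ)..2 * π, f θ * Complex.exp (-Complex.I * n * θ)) / (2 * π) := by
  rw [fourierCoeffOn_eq_integral f n two_pi_pos, sub_zero, one_div, Complex.real_smul,
    div_eq_inv_mul]
  push_cast
  congr 1
  refine intervalIntegral.integral_congr fun θ _ => ?_
  rw [fourier_coe_apply, smul_eq_mul, mul_comm]
  congr 2
  field_simp
  push_cast
  ring

theorem stmt2_general (Φ : ℝ → ℝ → ℂ)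
    (hΦint : ∀ r : ℝ, 0 < r →
      IntervalIntegrable (fun θ => Φ r θ) volume 0 (2 * π))
    (hΦ4 : ∀ r : ℝ, 0 < r →
      IntervalIntegrable (fun θ => ‖Φ r θ‖ ^ 4) volume 0 (2 * π))
    (hL4 : Integrable (fun r : ℝ => (∫ θ in (0:ℝ)..(2 * π), ‖Φ r θ‖ ^ 4) * r)
      (volume.restrict (Set.Ioi (0:ℝ))))
    (φ : ℤ → ℝ → ℂ)
    (hφ : ∀ (n : ℤ) (r : ℝ), 0 < r →
      φ n r = (∫ θ in (0:ℝ)..(2 * π),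
        Φ r θ * Complex.exp (-Complex.I * (n : ℂ) * (θ : ℂ))) / (2 * (π : ℂ))) :
    2 * π * ∑' pq : ℤ × ℤ,
        (∫ r in Set.Ioi (0:ℝ), ‖φ pq.1 r‖ ^ 2 * ‖φ pq.2 r‖ ^ 2 * r)
      ≤ ∫ r in Set.Ioi (0:ℝ), (∫ θ in (0:ℝ)..(2 * π), ‖Φ r θ‖ ^ 4) * r := by
  have hφ_eq (r : ℝ) (hr : 0 < r) : (fun n => φ n r) = fourierCoeffOn two_pi_pos (Φ r) :=
    funext fun n => by rw [hφ n r hr, fourierCoeffOn_zero_two_pi]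
  have hΦ_memLp (r : ℝ) (hr : 0 < r) : MemLp (Φ r) 4 (volume.restrict (Ioc 0 (2 * π))) := by
    rw [← integrable_norm_rpow_iff (hΦint r hr).1.aestronglyMeasurable (by norm_num) (by norm_num)]
    simpa using (hΦ4 r hr).1.integrable
  have hfiber (r : ℝ) (hr : 0 < r) :
      HasSum (fun pq : ℤ × ℤ => ‖φ pq.1 r‖ ^ 2 * ‖φ pq.2 r‖ ^ 2 * r)
        ((∑' n, ‖φ n r‖ ^ 2) ^ 2 * r) := by
    have hparseval :=
      hasSum_sq_fourierCoeffOn two_pi_pos ((hΦ_memLp r hr).mono_exponent (by norm_num))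
    rw [← hφ_eq r hr] at hparseval
    exact (hparseval.tsum_eq ▸ hparseval.mul_self_of_nonneg fun n => by positivity).mul_right r
  have hbound (r : ℝ) (hr : 0 < r) :
      (∑' n, ‖φ n r‖ ^ 2) ^ 2 * r ≤ (2 * π)⁻¹ * ((∫ θ in (0:ℝ)..(2 * π), ‖Φ r θ‖ ^ 4) * r) := by
    have h := sq_tsum_sq_fourierCoeffOn_le two_pi_pos (hΦ_memLp r hr)
    rw [← hφ_eq r hr, sub_zero] at h
    rw [← mul_assoc]
    exact mul_le_mul_of_nonneg_right h hr.le
  have hpos : ∀ᵐ r ∂(volume.restrict (Ioi (0:ℝ))), 0 < r := ae_restrict_mem measurableSet_Ioi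
  have key := tsum_integral_le_integral_of_tsum_le (hL4.const_mul (2 * π)⁻¹)
    (hpos.mono fun r hr _ => by positivity) (hpos.mono fun r hr => (hfiber r hr).summable)
    (hpos.mono fun r hr => (hfiber r hr).tsum_eq ▸ hbound r hr)
  calc 2 * π * ∑' pq : ℤ × ℤ, (∫ r in Ioi (0:ℝ), ‖φ pq.1 r‖ ^ 2 * ‖φ pq.2 r‖ ^ 2 * r)
      ≤ 2 * π * ∫ r in Ioi (0:ℝ), (2 * π)⁻¹ * ((∫ θ in (0:ℝ)..(2 * π), ‖Φ r θ‖ ^ 4) * r) :=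
        mul_le_mul_of_nonneg_left key two_pi_pos.le
    _ = ∫ r in Ioi (0:ℝ), (∫ θ in (0:ℝ)..(2 * π), ‖Φ r θ‖ ^ 4) * r := by
        rw [integral_const_mul, ← mul_assoc, mul_inv_cancel₀ two_pi_pos.ne', one_mul]

/-- For `Φ ∈ L⁴(ℝ²)` written in polar coordinates with angular Fourier coefficients
`φ_n(r) = (1/2π) ∫_0^{2π} Φ(r,θ) e^{-inθ} dθ`, one has
`∫_{ℝ²} |Φ|⁴ ≥ 2π Σ_{p,q∈ℤ} ∫_0^∞ |φ_p|²|φ_q|² r dr`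
(the left-hand side being expressed in polar coordinates). -/
theorem stmt2 (Φ : ℝ → ℝ → ℂ)
    (hΦint : ∀ r : ℝ, 0 < r →
      IntervalIntegrable (fun θ => Φ r θ) volume 0 (2 * π))
    (hΦ4 : ∀ r : ℝ, 0 < r →
      IntervalIntegrable (fun θ => ‖Φ r θ‖ ^ 4) volume 0 (2 * π))
    (hL4 : Integrable (fun r : ℝ => (∫ θ in (0:ℝ)..(2 * π), ‖Φ r θ‖ ^ 4) * r)
      (volume.restrict (Set.Ioi (0:ℝ))))
    (φ : ℤ → ℝ → ℂ)
    (hφ : ∀ (n : ℤ) (r : ℝ), 0 < r →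
      φ n r = (∫ θ in (0:ℝ)..(2 * π),
        Φ r θ * Complex.exp (-Complex.I * (n : ℂ) * (θ : ℂ))) / (2 * (π : ℂ)))
    (hsum : Summable fun pq : ℤ × ℤ =>
      ∫ r in Set.Ioi (0:ℝ), ‖φ pq.1 r‖ ^ 2 * ‖φ pq.2 r‖ ^ 2 * r) :
    2 * π * ∑' pq : ℤ × ℤ,
        (∫ r in Set.Ioi (0:ℝ), ‖φ pq.1 r‖ ^ 2 * ‖φ pq.2 r‖ ^ 2 * r)
      ≤ ∫ r in Set.Ioi (0:ℝ), (∫ θ in (0:ℝ)..(2 * π), ‖Φ r θ‖ ^ 4) * r :=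
  stmt2_general Φ hΦint hΦ4 hL4 φ hφ
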